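/- Let n ≥ 4 with n ≡ 0 (mod 4), and let A_n² be the square of the n×n upper-shift matrix. Then every X ∈ M_n(ℂ) satisfying Xᵀ A_n² X = A_n² has determinant 1; that is, the congruence group Sol_{A_n²} is contained in SL_n(ℂ). -/
import Mathlib


open Matrix

/-- The `n × n` nilpotent upper-shift matrix `A_n`. -/
def shiftMat (n : ℕ) : Matrix (Fin n) (Fin n) ℂ :=
  Matrix.of fun i j => if (j : ℕ) = (i : ℕ) + 1 then 1 else 0

namespace Stmt18Aux

lemma sum_ite_nat {n : ℕ} (f : Fin n → ℂ) (a : ℕ) :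
    (∑ k : Fin n, if (k : ℕ) = a then f k else 0) = if h : a < n then f ⟨a, h⟩ else 0 := by
  split_ifs with h
  · rw [Finset.sum_eq_single (⟨a, h⟩ : Fin n)]
    · simp
    · intro b _ hb
      exact if_neg (fun hba => hb (Fin.ext hba))
    · simp
  · exact Finset.sum_eq_zero fun k _ => if_neg (fun hk => h (by rw [← hk]; exact k.isLt))

lemma sum_ite_nat' {n : ℕ} (f : Fin n → ℂ) (c a : ℕ) :
    (∑ k : Fin n, if (k : ℕ) + c = a then f k else 0)
      = if h : a - c < n ∧ c ≤ a then f ⟨a - c, h.1⟩ else 0 := by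
  have : ∀ k : Fin n, (if (k : ℕ) + c = a then f k else 0)
      = if (k : ℕ) = a - c then (if c ≤ a then f k else 0) else 0 := by
    intro k
    split_ifs <;> first | rfl | (exfalso; omega)
  rw [Finset.sum_congr rfl (fun k _ => this k), sum_ite_nat]
  split_ifs <;> first | rfl | (exfalso; omega)

lemma sum_ite_nat_symm {n : ℕ} (f : Fin n → ℂ) (a : ℕ) :
    (∑ k : Fin n, if a = (k : ℕ) then f k else 0) = if h : a < n then f ⟨a, h⟩ else 0 := by
  rw [← sum_ite_nat]
  exact Finset.sum_congr rfl fun k _ => by split_ifs <;> first | rfl | (exfalso; omega)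

lemma sum_ite_nat'_symm {n : ℕ} (f : Fin n → ℂ) (c a : ℕ) :
    (∑ k : Fin n, if a = (k : ℕ) + c then f k else 0)
      = if h : a - c < n ∧ c ≤ a then f ⟨a - c, h.1⟩ else 0 := by
  rw [← sum_ite_nat']
  exact Finset.sum_congr rfl fun k _ => by split_ifs <;> first | rfl | (exfalso; omega)

variable (n : ℕ)

def BB : Matrix (Fin n) (Fin n) ℂ :=
  Matrix.of fun i j => if (j : ℕ) = (i : ℕ) + 2 then 1 else 0

def KK : Matrix (Fin n) (Fin n) ℂ :=
  Matrix.of fun i j =>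
    (if (j : ℕ) = (i : ℕ) + 2 then (1 : ℂ) else 0) - (if (j : ℕ) + 2 = (i : ℕ) then 1 else 0)

def GG : Matrix (Fin n) (Fin n) ℂ :=
  Matrix.of fun i j =>
    if (j : ℕ) % 4 = ((i : ℕ) + 2) % 4 then
      (if (i : ℕ) % 4 ≤ 1 then (if (i : ℕ) < (j : ℕ) then -1 else 0)
       else (if (j : ℕ) < (i : ℕ) then 1 else 0))
    else 0

def VV : Matrix (Fin n) (Fin n) ℂ :=
  Matrix.of fun i j =>
    if (j : ℕ) % 4 = (i : ℕ) % 4 then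
      (if (i : ℕ) % 4 ≤ 1 then (if (i : ℕ) < (j : ℕ) then -1 else 0)
       else (if (j : ℕ) ≤ (i : ℕ) then 1 else 0))
    else 0

lemma shift_sq : shiftMat n ^ 2 = BB n := by
  ext i j
  have hj := j.isLt
  rw [pow_two, mul_apply]
  simp only [shiftMat, BB, of_apply, ite_mul, one_mul, zero_mul]
  rw [sum_ite_nat]
  split_ifs <;> first | rfl | (exfalso; omega)

lemma KV (h4 : n % 4 = 0) : KK n * VV n = BB n := by
  ext i j
  have hi := i.isLt; have hj := j.isLt
  rw [mul_apply]
  simp only [KK, VV, BB, of_apply, sub_mul, ite_mul, one_mul, zero_mul]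
  rw [Finset.sum_sub_distrib, sum_ite_nat, sum_ite_nat']
  simp only [Fin.val_mk]
  split_ifs <;> first | rfl | (exfalso; omega) | norm_num

lemma KG (h4 : n % 4 = 0) : KK n * GG n = 1 := by
  ext i j
  have hi := i.isLt; have hj := j.isLt
  rw [mul_apply]
  simp only [KK, GG, of_apply, sub_mul, ite_mul, one_mul, zero_mul]
  rw [Finset.sum_sub_distrib, sum_ite_nat, sum_ite_nat']
  simp only [Matrix.one_apply, Fin.ext_iff, Fin.val_mk]
  split_ifs <;> first | rfl | (exfalso; omega) | norm_num

lemma GK (h4 : n % 4 = 0) : GG n * KK n = 1 := by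
  ext i j
  have hi := i.isLt; have hj := j.isLt
  rw [mul_apply]
  simp only [KK, GG, of_apply, mul_sub, mul_ite, mul_one, mul_zero]
  rw [Finset.sum_sub_distrib, sum_ite_nat'_symm, sum_ite_nat_symm]
  simp only [Matrix.one_apply, Fin.ext_iff, Fin.val_mk]
  split_ifs <;> first | rfl | (exfalso; omega) | norm_num


def dd (n : ℕ) : Fin n → ℂ := fun i => if (i : ℕ) % 4 ≤ 1 then 0 else 1

def EEE (n : ℕ) : Matrix (Fin n) (Fin n) ℂ := Matrix.diagonal (dd n)

variable {n : ℕ}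

lemma dd_mul_self (i : Fin n) : dd n i * dd n i = dd n i := by
  simp only [dd]; split_ifs <;> ring

lemma EV : EEE n * VV n = VV n * EEE n := by
  ext i j
  simp only [EEE, VV, Matrix.diagonal_mul, Matrix.mul_diagonal, of_apply, dd]
  split_ifs <;> first | rfl | (exfalso; omega) | ring1

lemma EEmul : EEE n * EEE n = EEE n := by
  rw [EEE, Matrix.diagonal_mul_diagonal]
  exact congrArg Matrix.diagonal (funext fun i => dd_mul_self i)

lemma Nsupp (i j : Fin n) (h : ¬((i:ℕ) + 4 ≤ (j:ℕ))) : (VV n - VV n * EEE n) i j = 0 := by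
  simp only [Matrix.sub_apply, EEE, Matrix.mul_diagonal, VV, of_apply, dd]
  split_ifs <;> first | rfl | (exfalso; omega) | ring1

lemma N1supp (i j : Fin n) (h : ¬((j:ℕ) + 4 ≤ (i:ℕ))) : (VV n * EEE n - EEE n) i j = 0 := by
  simp only [Matrix.sub_apply, EEE, Matrix.mul_diagonal, Matrix.diagonal_apply, VV, of_apply,
    dd, Fin.ext_iff]
  split_ifs <;> first | rfl | (exfalso; omega) | ring1

lemma pow_supp_upper (M : Matrix (Fin n) (Fin n) ℂ)
    (h : ∀ i j : Fin n, ¬((i:ℕ) + 4 ≤ (j:ℕ)) → M i j = 0) :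
    ∀ (k : ℕ) (i j : Fin n), ¬((i:ℕ) + 4 * k ≤ (j:ℕ)) → (M ^ k) i j = 0 := by
  intro k
  induction k with
  | zero =>
    intro i j hij
    rw [pow_zero, Matrix.one_apply, if_neg]
    intro he; apply hij; rw [he]; omega
  | succ k ih =>
    intro i j hij
    rw [pow_succ, Matrix.mul_apply]
    apply Finset.sum_eq_zero; intro l _
    by_cases hl : (i:ℕ) + 4 * k ≤ (l:ℕ)
    · rw [h l j (by omega), mul_zero]
    · rw [ih i l hl, zero_mul]

lemma pow_supp_lower (M : Matrix (Fin n) (Fin n) ℂ)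
    (h : ∀ i j : Fin n, ¬((j:ℕ) + 4 ≤ (i:ℕ)) → M i j = 0) :
    ∀ (k : ℕ) (i j : Fin n), ¬((j:ℕ) + 4 * k ≤ (i:ℕ)) → (M ^ k) i j = 0 := by
  intro k
  induction k with
  | zero =>
    intro i j hij
    rw [pow_zero, Matrix.one_apply, if_neg]
    intro he; apply hij; rw [he]; omega
  | succ k ih =>
    intro i j hij
    rw [pow_succ, Matrix.mul_apply]
    apply Finset.sum_eq_zero; intro l _
    by_cases hl : (j:ℕ) + 4 ≤ (l:ℕ)
    · rw [ih i l (by omega), zero_mul]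
    · rw [h l j hl, mul_zero]

lemma pow_eq_zero_upper (M : Matrix (Fin n) (Fin n) ℂ)
    (h : ∀ i j : Fin n, ¬((i:ℕ) + 4 ≤ (j:ℕ)) → M i j = 0) (hn : 1 ≤ n) : M ^ n = 0 := by
  ext i j
  rw [Matrix.zero_apply]
  exact pow_supp_upper M h n i j (by have := j.isLt; omega)

lemma pow_eq_zero_lower (M : Matrix (Fin n) (Fin n) ℂ)
    (h : ∀ i j : Fin n, ¬((j:ℕ) + 4 ≤ (i:ℕ)) → M i j = 0) (hn : 1 ≤ n) : M ^ n = 0 := by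
  ext i j
  rw [Matrix.zero_apply]
  exact pow_supp_lower M h n i j (by have := i.isLt; omega)

lemma add_pow_of_mul_eq_zero {R : Type*} [Ring R] {A B : R} (hAB : A * B = 0) (hBA : B * A = 0) :
    ∀ k : ℕ, (A + B) ^ (k + 1) = A ^ (k + 1) + B ^ (k + 1) := by
  intro k
  induction k with
  | zero => simp
  | succ k ih =>
    have h1 : A ^ (k + 1) * B = 0 := by
      rw [pow_succ, mul_assoc, hAB, mul_zero]
    have h2 : B ^ (k + 1) * A = 0 := by
      rw [pow_succ, mul_assoc, hBA, mul_zero]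
    calc (A + B) ^ (k + 2) = (A + B) ^ (k + 1) * (A + B) := pow_succ _ _
      _ = (A ^ (k+1) + B ^ (k+1)) * (A + B) := by rw [ih]
      _ = A ^ (k+1) * A + (A ^ (k+1) * B + (B ^ (k+1) * A + B ^ (k+1) * B)) := by noncomm_ring
      _ = A ^ (k + 2) + B ^ (k + 2) := by
          rw [h1, h2, zero_add, zero_add, ← pow_succ, ← pow_succ]

lemma add_pow_of_mul_eq_zero' {R : Type*} [Ring R] {A B : R} (hAB : A * B = 0)
    (hBA : B * A = 0) {k : ℕ} (hk : k ≠ 0) : (A + B) ^ k = A ^ k + B ^ k := by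
  obtain ⟨p, rfl⟩ : ∃ p, k = p + 1 := ⟨k - 1, by omega⟩
  exact add_pow_of_mul_eq_zero hAB hBA p

lemma VE_pow_sub_E_supp :
    ∀ (k : ℕ) (i j : Fin n), ¬((j:ℕ) + 4 ≤ (i:ℕ)) →
      ((VV n * EEE n) ^ (k + 1) - EEE n) i j = 0 := by
  intro k
  induction k with
  | zero => intro i j h; rw [pow_one]; exact N1supp i j h
  | succ k ih =>
    intro i j hij
    have hrec : (VV n * EEE n) ^ (k + 2) - EEE n
        = (EEE n) * ((VV n * EEE n) ^ (k + 1) - EEE n)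
          + (VV n * EEE n - EEE n) * ((VV n * EEE n) ^ (k + 1) - EEE n)
          + (VV n * EEE n * EEE n - EEE n) := by
      rw [pow_succ']
      noncomm_ring
    rw [hrec]
    rw [Matrix.add_apply, Matrix.add_apply]
    have t1 : (EEE n * ((VV n * EEE n) ^ (k + 1) - EEE n)) i j = 0 := by
      have he : (EEE n * ((VV n * EEE n) ^ (k + 1) - EEE n)) i j
          = dd n i * (((VV n * EEE n) ^ (k + 1) - EEE n)) i j := by
        simp [EEE, Matrix.diagonal_mul]
      rw [he, ih i j hij, mul_zero]
    have t2 : ((VV n * EEE n - EEE n) * ((VV n * EEE n) ^ (k + 1) - EEE n)) i j = 0 := by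
      rw [Matrix.mul_apply]
      apply Finset.sum_eq_zero; intro l _
      by_cases hl : (l:ℕ) + 4 ≤ (i:ℕ)
      · rw [ih l j (by omega), mul_zero]
      · rw [N1supp i l hl, zero_mul]
    have t3 : (VV n * EEE n * EEE n - EEE n) i j = 0 := by
      rw [mul_assoc, EEmul]; exact N1supp i j hij
    rw [t1, t2, t3]; ring

lemma VE_pow_sub_E_supp' {k : ℕ} (hk : k ≠ 0) (i j : Fin n) (h : ¬((j:ℕ) + 4 ≤ (i:ℕ))) :
    ((VV n * EEE n) ^ k - EEE n) i j = 0 := by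
  obtain ⟨p, rfl⟩ : ∃ p, k = p + 1 := ⟨k - 1, by omega⟩
  exact VE_pow_sub_E_supp p i j h

lemma Epow' (n : ℕ) {k : ℕ} (hk : k ≠ 0) : EEE n ^ k = EEE n := by
  obtain ⟨p, rfl⟩ : ∃ p, k = p + 1 := ⟨k - 1, by omega⟩
  induction p with
  | zero => exact pow_one _
  | succ q ih => rw [pow_succ, ih (by omega), EEmul]

def splitEquiv (n : ℕ) (h4 : n % 4 = 0) : Fin n ≃ (Fin (n / 2) ⊕ Fin (n / 2)) where
  toFun i :=
    if h : (i : ℕ) % 4 ≤ 1 then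
      Sum.inl ⟨2 * ((i : ℕ) / 4) + (i : ℕ) % 4, by have := i.isLt; omega⟩
    else
      Sum.inr ⟨2 * ((i : ℕ) / 4) + (i : ℕ) % 4 - 2, by have := i.isLt; omega⟩
  invFun x :=
    Sum.elim
      (fun (k : Fin (n / 2)) =>
        (⟨4 * ((k : ℕ) / 2) + (k : ℕ) % 2, by have := k.isLt; omega⟩ : Fin n))
      (fun (k : Fin (n / 2)) =>
        (⟨4 * ((k : ℕ) / 2) + (k : ℕ) % 2 + 2, by have := k.isLt; omega⟩ : Fin n)) x
  left_inv i := by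
    have hi := i.isLt
    by_cases h : (i : ℕ) % 4 ≤ 1
    · dsimp only
      rw [dif_pos h]
      simp only [Sum.elim_inl]
      exact Fin.ext (by (try simp only [Fin.val_mk]); omega)
    · dsimp only
      rw [dif_neg h]
      simp only [Sum.elim_inr]
      exact Fin.ext (by (try simp only [Fin.val_mk]); omega)
  right_inv x := by
    rcases x with k | k
    · have hk := k.isLt
      dsimp only [Sum.elim_inl]
      rw [dif_pos (by (try simp only [Fin.val_mk]); omega)]
      exact congrArg Sum.inl (Fin.ext (by (try simp only [Fin.val_mk]); omega))
    · have hk := k.isLt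
      dsimp only [Sum.elim_inr]
      rw [dif_neg (by (try simp only [Fin.val_mk]); omega)]
      exact congrArg Sum.inr (Fin.ext (by (try simp only [Fin.val_mk]); omega))

lemma splitEquiv_symm_inl (n : ℕ) (h4 : n % 4 = 0) (a : Fin (n / 2)) :
    (((splitEquiv n h4).symm (Sum.inl a) : Fin n) : ℕ) % 4 ≤ 1 := by
  have h : (((splitEquiv n h4).symm (Sum.inl a) : Fin n) : ℕ)
      = 4 * ((a : ℕ) / 2) + (a : ℕ) % 2 := by
    simp only [splitEquiv, Equiv.coe_fn_symm_mk, Sum.elim_inl]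
  omega

lemma splitEquiv_symm_inr (n : ℕ) (h4 : n % 4 = 0) (a : Fin (n / 2)) :
    ¬ ((((splitEquiv n h4).symm (Sum.inr a) : Fin n) : ℕ) % 4 ≤ 1) := by
  have h : (((splitEquiv n h4).symm (Sum.inr a) : Fin n) : ℕ)
      = 4 * ((a : ℕ) / 2) + (a : ℕ) % 2 + 2 := by
    simp only [splitEquiv, Equiv.coe_fn_symm_mk, Sum.elim_inr]
  omega

lemma KKclass (i j : Fin n)
    (h : ((i:ℕ) % 4 ≤ 1 ∧ (j:ℕ) % 4 ≤ 1) ∨ (¬(i:ℕ) % 4 ≤ 1 ∧ ¬(j:ℕ) % 4 ≤ 1)) :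
    KK n i j = 0 := by
  simp only [KK, of_apply]
  split_ifs <;> first | ring1 | (exfalso; omega)

theorem stmt_18' (n : ℕ) (hn : 4 ≤ n) (h4 : n % 4 = 0)
    (X : Matrix (Fin n) (Fin n) ℂ)
    (hX : Xᵀ * shiftMat n ^ 2 * X = shiftMat n ^ 2) :
    X.det = 1 := by
  classical
  rw [shift_sq n] at hX
  have hKV := KV n h4
  have hKG := KG n h4
  have hGK := GK n h4
  have hXT : Xᵀ * (BB n)ᵀ * X = (BB n)ᵀ := by
    have h := congrArg Matrix.transpose hX
    rw [Matrix.transpose_mul, Matrix.transpose_mul, Matrix.transpose_transpose,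
      ← Matrix.mul_assoc] at h
    exact h
  have hKB : KK n = BB n - (BB n)ᵀ := by
    ext i j
    simp only [KK, BB, Matrix.sub_apply, Matrix.transpose_apply, of_apply]
    split_ifs <;> first | rfl | (exfalso; omega) | ring1
  have hKX : Xᵀ * KK n * X = KK n := by
    rw [hKB, Matrix.mul_sub, Matrix.sub_mul, hX, hXT]
  have hdetK : (KK n).det ≠ 0 := by
    have h := congrArg Matrix.det hKG
    rw [Matrix.det_mul, Matrix.det_one] at h
    intro h0; rw [h0, zero_mul] at h; exact zero_ne_one h
  have hdetX : IsUnit X.det := by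
    rw [isUnit_iff_ne_zero]
    intro h0
    have h := congrArg Matrix.det hKX
    rw [Matrix.det_mul, h0, mul_zero] at h
    exact hdetK h.symm
  have hXX : X * X⁻¹ = 1 := Matrix.mul_nonsing_inv X hdetX
  have hXtK : Xᵀ * KK n = KK n * X⁻¹ := by
    calc Xᵀ * KK n = Xᵀ * KK n * (X * X⁻¹) := by rw [hXX, Matrix.mul_one]
    _ = (Xᵀ * KK n * X) * X⁻¹ := by rw [Matrix.mul_assoc (Xᵀ * KK n)]
    _ = KK n * X⁻¹ := by rw [hKX]
  have hVX : VV n * X = X * VV n := by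
    have h1 : KK n * (X⁻¹ * (VV n * X)) = KK n * VV n := by
      calc KK n * (X⁻¹ * (VV n * X)) = (KK n * X⁻¹) * VV n * X := by
            rw [Matrix.mul_assoc (KK n * X⁻¹), Matrix.mul_assoc]
      _ = (Xᵀ * KK n) * VV n * X := by rw [hXtK]
      _ = Xᵀ * (KK n * VV n) * X := by rw [Matrix.mul_assoc Xᵀ]
      _ = Xᵀ * BB n * X := by rw [hKV]
      _ = BB n := hX
      _ = KK n * VV n := hKV.symm
    have h2 : X⁻¹ * (VV n * X) = VV n := by
      have h := congrArg (fun M => GG n * M) h1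
      simpa only [← Matrix.mul_assoc, hGK, Matrix.one_mul] using h
    calc VV n * X = (X * X⁻¹) * (VV n * X) := by rw [hXX, Matrix.one_mul]
    _ = X * (X⁻¹ * (VV n * X)) := by rw [Matrix.mul_assoc]
    _ = X * VV n := by rw [h2]
  have hEVc : EEE n * VV n = VV n * EEE n := EV
  have hEE : EEE n * EEE n = EEE n := EEmul
  have he1 : VV n * EEE n * VV n = VV n * VV n * EEE n := by
    rw [Matrix.mul_assoc, hEVc, ← Matrix.mul_assoc]
  have he2 : (VV n * EEE n) * (VV n * EEE n) = VV n * VV n * EEE n := by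
    rw [← Matrix.mul_assoc, he1, Matrix.mul_assoc, hEE]
  have hprod1 : (VV n * EEE n) * (VV n - VV n * EEE n) = 0 := by
    rw [Matrix.mul_sub, he1, he2, sub_self]
  have hprod2 : (VV n - VV n * EEE n) * (VV n * EEE n) = 0 := by
    rw [Matrix.sub_mul, ← Matrix.mul_assoc, he2, sub_self]
  have hVsplit : VV n = VV n * EEE n + (VV n - VV n * EEE n) := by abel
  have hNn : (VV n - VV n * EEE n) ^ n = 0 :=
    pow_eq_zero_upper _ (fun i j h => Nsupp i j h) (by omega)
  have hWn : VV n ^ n = (VV n * EEE n) ^ n := by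
    conv_lhs => rw [hVsplit]
    rw [add_pow_of_mul_eq_zero' hprod1 hprod2 (by omega : n ≠ 0), hNn, add_zero]
  have hcomE : Commute (EEE n) (VV n) := hEVc
  have hEpow : EEE n ^ n = EEE n := Epow' n (by omega)
  have hVnE : VV n ^ n * EEE n = VV n ^ n := by
    have h1 : VV n ^ n = VV n ^ n * EEE n := by
      conv_lhs => rw [hWn, (hcomE.symm).mul_pow, hEpow]
    exact h1.symm
  have hRsupp : ∀ i j : Fin n, ¬((j:ℕ) + 4 ≤ (i:ℕ)) → (VV n ^ n - EEE n) i j = 0 := by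
    intro i j h
    rw [hWn]
    exact VE_pow_sub_E_supp' (by omega : n ≠ 0) i j h
  have hRn : (VV n ^ n - EEE n) ^ n = 0 := pow_eq_zero_lower _ hRsupp (by omega)
  have hER : EEE n * (VV n ^ n - EEE n) = VV n ^ n - EEE n := by
    rw [Matrix.mul_sub, hEE, (hcomE.pow_right n).eq, hVnE]
  have hRE : (VV n ^ n - EEE n) * EEE n = VV n ^ n - EEE n := by
    rw [Matrix.sub_mul, hEE, hVnE]
  have hsplitW : VV n ^ n = EEE n + (VV n ^ n - EEE n) := by abel
  have hcX : Commute X (VV n) := hVX.symm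
  have hXW : X * VV n ^ n = VV n ^ n * X := (hcX.pow_right n).eq
  -- Y = 0
  have hY0 : (1 - EEE n) * X * EEE n = 0 := by
    have hzero : (1 - EEE n) * X * VV n ^ n = 0 := by
      rw [Matrix.mul_assoc, hXW, ← Matrix.mul_assoc, Matrix.sub_mul, Matrix.one_mul,
        (hcomE.pow_right n).eq, hVnE, sub_self, Matrix.zero_mul]
    have hYR : (1 - EEE n) * X * EEE n
        = - ((1 - EEE n) * X * EEE n * (VV n ^ n - EEE n)) := by
      have h1 : (1 - EEE n) * X * (EEE n + (VV n ^ n - EEE n)) = 0 := by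
        rw [← hsplitW]; exact hzero
      rw [Matrix.mul_add] at h1
      have h2 : (1 - EEE n) * X * (VV n ^ n - EEE n)
          = (1 - EEE n) * X * EEE n * (VV n ^ n - EEE n) := by
        conv_lhs => rw [← hER]
        rw [← Matrix.mul_assoc]
      rw [h2] at h1
      exact eq_neg_of_add_eq_zero_left h1
    have hiter : ∀ k : ℕ, (1 - EEE n) * X * EEE n
        = (1 - EEE n) * X * EEE n * (-(VV n ^ n - EEE n)) ^ k := by
      intro k; induction k with
      | zero => simp
      | succ k ih =>
        rw [pow_succ, ← Matrix.mul_assoc, ← ih, Matrix.mul_neg]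
        exact hYR
    have h := hiter n
    rw [neg_pow, hRn, mul_zero, Matrix.mul_zero] at h
    exact h
  -- Z = 0
  have hZ0 : EEE n * X * (1 - EEE n) = 0 := by
    have hzero : VV n ^ n * (X * (1 - EEE n)) = 0 := by
      rw [← Matrix.mul_assoc, ← hXW, Matrix.mul_assoc, Matrix.mul_sub, Matrix.mul_one,
        hVnE, sub_self, Matrix.mul_zero]
    have hRZ : EEE n * (X * (1 - EEE n))
        = - ((VV n ^ n - EEE n) * (EEE n * (X * (1 - EEE n)))) := by
      have h1 : (EEE n + (VV n ^ n - EEE n)) * (X * (1 - EEE n)) = 0 := by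
        rw [← hsplitW]; exact hzero
      rw [Matrix.add_mul] at h1
      have h2 : (VV n ^ n - EEE n) * (X * (1 - EEE n))
          = (VV n ^ n - EEE n) * (EEE n * (X * (1 - EEE n))) := by
        conv_lhs => rw [← hRE]
        rw [Matrix.mul_assoc]
      rw [h2] at h1
      exact eq_neg_of_add_eq_zero_left h1
    have hiter : ∀ k : ℕ, EEE n * (X * (1 - EEE n))
        = (-(VV n ^ n - EEE n)) ^ k * (EEE n * (X * (1 - EEE n))) := by
      intro k; induction k with
      | zero => simp
      | succ k ih =>
        rw [pow_succ', Matrix.mul_assoc, ← ih, Matrix.neg_mul]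
        exact hRZ
    have h := hiter n
    rw [neg_pow, hRn, mul_zero, Matrix.zero_mul] at h
    rw [← Matrix.mul_assoc] at h
    exact h
  -- entries
  have h1E : (1 : Matrix (Fin n) (Fin n) ℂ) - EEE n
      = Matrix.diagonal (fun k => 1 - dd n k) := by
    rw [EEE, ← Matrix.diagonal_one, Matrix.diagonal_sub]
  have hX12 : ∀ i j : Fin n, (i:ℕ) % 4 ≤ 1 → ¬((j:ℕ) % 4 ≤ 1) → X i j = 0 := by
    intro i j hi hj
    have h := congrFun (congrFun hY0 i) j
    rw [h1E, EEE] at h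
    simp only [Matrix.mul_diagonal, Matrix.diagonal_mul, Matrix.zero_apply] at h
    simp only [dd, if_pos hi, if_neg hj] at h
    simpa using h
  have hX21 : ∀ i j : Fin n, ¬((i:ℕ) % 4 ≤ 1) → ((j:ℕ) % 4 ≤ 1) → X i j = 0 := by
    intro i j hi hj
    have h := congrFun (congrFun hZ0 i) j
    rw [h1E, EEE] at h
    simp only [Matrix.mul_diagonal, Matrix.diagonal_mul, Matrix.zero_apply] at h
    simp only [dd, if_neg hi, if_pos hj] at h
    simpa using h
  -- reindex
  set e := (splitEquiv n h4).symm with hedef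
  have hdetXX : X.det = (X.submatrix e e).det := (Matrix.det_submatrix_equiv_self e X).symm
  have hb12 : (X.submatrix e e).toBlocks₁₂ = 0 := by
    ext a b
    simp only [Matrix.toBlocks₁₂, Matrix.zero_apply, Matrix.submatrix_apply, of_apply]
    exact hX12 _ _ (splitEquiv_symm_inl n h4 a) (splitEquiv_symm_inr n h4 b)
  have hb21 : (X.submatrix e e).toBlocks₂₁ = 0 := by
    ext a b
    simp only [Matrix.toBlocks₂₁, Matrix.zero_apply, Matrix.submatrix_apply, of_apply]
    exact hX21 _ _ (splitEquiv_symm_inr n h4 a) (splitEquiv_symm_inl n h4 b)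
  have hk11 : ((KK n).submatrix e e).toBlocks₁₁ = 0 := by
    ext a b
    simp only [Matrix.toBlocks₁₁, Matrix.zero_apply, Matrix.submatrix_apply, of_apply]
    exact KKclass _ _ (Or.inl ⟨splitEquiv_symm_inl n h4 a, splitEquiv_symm_inl n h4 b⟩)
  have hk22 : ((KK n).submatrix e e).toBlocks₂₂ = 0 := by
    ext a b
    simp only [Matrix.toBlocks₂₂, Matrix.zero_apply, Matrix.submatrix_apply, of_apply]
    exact KKclass _ _ (Or.inr ⟨splitEquiv_symm_inr n h4 a, splitEquiv_symm_inr n h4 b⟩)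
  have hXb : X.submatrix e e
      = Matrix.fromBlocks (X.submatrix e e).toBlocks₁₁ 0 0 (X.submatrix e e).toBlocks₂₂ := by
    conv_lhs => rw [← Matrix.fromBlocks_toBlocks (X.submatrix e e)]
    rw [hb12, hb21]
  have hKb : (KK n).submatrix e e
      = Matrix.fromBlocks 0 ((KK n).submatrix e e).toBlocks₁₂
          ((KK n).submatrix e e).toBlocks₂₁ 0 := by
    conv_lhs => rw [← Matrix.fromBlocks_toBlocks ((KK n).submatrix e e)]
    rw [hk11, hk22]
  have hKX' : (X.submatrix e e)ᵀ * (KK n).submatrix e e * X.submatrix e e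
      = (KK n).submatrix e e := by
    rw [Matrix.transpose_submatrix, Matrix.submatrix_mul_equiv, Matrix.submatrix_mul_equiv, hKX]
  have hblockEq : (X.submatrix e e).toBlocks₁₁ᵀ * (((KK n).submatrix e e).toBlocks₁₂
      * (X.submatrix e e).toBlocks₂₂) = ((KK n).submatrix e e).toBlocks₁₂ := by
    have h := hKX'
    rw [hXb, hKb, Matrix.fromBlocks_transpose, Matrix.fromBlocks_multiply,
      Matrix.fromBlocks_multiply] at h
    have h2 := congrArg Matrix.toBlocks₁₂ h
    simpa only [Matrix.toBlocks_fromBlocks₁₂, Matrix.transpose_zero, Matrix.mul_zero,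
      Matrix.zero_mul, add_zero, zero_add, Matrix.mul_assoc] using h2
  have hdetK' : ((KK n).submatrix e e).det ≠ 0 := by
    rw [Matrix.det_submatrix_equiv_self]; exact hdetK
  have hSw2 : (Matrix.fromBlocks 0 1 1 0 : Matrix (Fin (n/2) ⊕ Fin (n/2)) (Fin (n/2) ⊕ Fin (n/2)) ℂ)
      * (Matrix.fromBlocks 0 1 1 0 : Matrix (Fin (n/2) ⊕ Fin (n/2)) (Fin (n/2) ⊕ Fin (n/2)) ℂ) = 1 := by
    rw [Matrix.fromBlocks_multiply]
    simp [Matrix.fromBlocks_one]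
  have hdetSw : (Matrix.fromBlocks 0 1 1 0 : Matrix (Fin (n/2) ⊕ Fin (n/2)) (Fin (n/2) ⊕ Fin (n/2)) ℂ).det ≠ 0 := by
    intro h0
    have h := congrArg Matrix.det hSw2
    rw [Matrix.det_mul, h0, mul_zero, Matrix.det_one] at h
    exact zero_ne_one h
  have hKSw : (KK n).submatrix e e * (Matrix.fromBlocks 0 1 1 0 : Matrix (Fin (n/2) ⊕ Fin (n/2)) (Fin (n/2) ⊕ Fin (n/2)) ℂ)
      = Matrix.fromBlocks (((KK n).submatrix e e).toBlocks₁₂) 0 0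
          (((KK n).submatrix e e).toBlocks₂₁) := by
    conv_lhs => rw [hKb]
    rw [Matrix.fromBlocks_multiply]
    simp
  have hdetM : (((KK n).submatrix e e).toBlocks₁₂).det ≠ 0 := by
    have h := congrArg Matrix.det hKSw
    rw [Matrix.det_mul, Matrix.det_fromBlocks_zero₂₁] at h
    have hne : (((KK n).submatrix e e).toBlocks₁₂).det
        * (((KK n).submatrix e e).toBlocks₂₁).det ≠ 0 := by
      rw [← h]; exact mul_ne_zero hdetK' hdetSw
    exact (mul_ne_zero_iff.mp hne).1
  have hPQ : ((X.submatrix e e).toBlocks₁₁).det * ((X.submatrix e e).toBlocks₂₂).det = 1 := by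
    have h := congrArg Matrix.det hblockEq
    rw [Matrix.det_mul, Matrix.det_mul, Matrix.det_transpose] at h
    apply mul_left_cancel₀ hdetM
    rw [mul_one]
    linear_combination h
  rw [hdetXX, hXb, Matrix.det_fromBlocks_zero₂₁]
  exact hPQ

end Stmt18Aux

/-- For `n ≥ 4` with `n ≡ 0 (mod 4)`, every solution of
`Xᵀ A_n² X = A_n²` has determinant `1`; i.e. `Sol_{A_n²} ⊆ SL_n(ℂ)`. -/
theorem stmt_18 (n : ℕ) (hn : 4 ≤ n) (h4 : n % 4 = 0)
    (X : Matrix (Fin n) (Fin n) ℂ)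
    (hX : Xᵀ * shiftMat n ^ 2 * X = shiftMat n ^ 2) :
    X.det = 1 :=
  Stmt18Aux.stmt_18' n hn h4 X hX
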